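/- Let ω be a closed 2-form on a manifold F and A_ω = TF ⊕ (F×ℝ) the prequantization Lie algebroid with bracket [(X,f),(Y,g)] = ([X,Y], L_X g − L_Y f + ω(X,Y)). For a vector field Z and a 1-form α on F, define D : Γ(A_ω) → Γ(A_ω) by D(Y,g) = (L_Z Y, L_Z g + α(Y)). Then D is a derivation of the bracket, i.e. D[(Y₁,g₁),(Y₂,g₂)] = [D(Y₁,g₁),(Y₂,g₂)] + [(Y₁,g₁),D(Y₂,g₂)], if and only if L_Z ω = dα. -/
import Mathlib


/-- Abstract formalization: on the prequantization Lie algebroid of a closed 2-form `ω`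
with bracket `[(X,f),(Y,g)] = ([X,Y], L_X g − L_Y f + ω(X,Y))`, the operator
`D(Y,g) = (L_Z Y, L_Z g + α(Y))` attached to a vector field `Z` and a 1-form `α` is a
derivation of the bracket iff `L_Z ω = dα` (written in coordinates). -/
theorem stmt_12 {Fn VF : Type*} [CommRing Fn] [LieRing VF]
    (L : VF → Fn → Fn)
    (hL_br : ∀ (X Y : VF) (f : Fn), L ⁅X, Y⁆ f = L X (L Y f) - L Y (L X f))
    (hL_add : ∀ (X : VF) (f g : Fn), L X (f + g) = L X f + L X g)
    (ω : VF → VF → Fn)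
    (hω_anti : ∀ X Y : VF, ω X Y = - ω Y X)
    (α : VF → Fn)
    (hα_add : ∀ X Y : VF, α (X + Y) = α X + α Y)
    (Z : VF) :
    let br : VF × Fn → VF × Fn → VF × Fn :=
      fun a b => (⁅a.1, b.1⁆, L a.1 b.2 - L b.1 a.2 + ω a.1 b.1)
    let D : VF × Fn → VF × Fn := fun a => (⁅Z, a.1⁆, L Z a.2 + α a.1)
    (∀ a b : VF × Fn, D (br a b) = br (D a) b + br a (D b)) ↔
      (∀ X Y : VF,
        L Z (ω X Y) - ω ⁅Z, X⁆ Y - ω X ⁅Z, Y⁆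
          = L X (α Y) - L Y (α X) - α ⁅X, Y⁆) := by
  intro br D
  have hL0 : ∀ X : VF, L X (0 : Fn) = 0 := by
    intro X
    have := hL_add X 0 0
    simpa using this
  have hL_sub : ∀ (X : VF) (f g : Fn), L X (f - g) = L X f - L X g := by
    intro X f g
    have h := hL_add X (f - g) g
    rw [sub_add_cancel] at h
    linear_combination -h
  constructor
  · intro h X Y
    have h2 := congrArg Prod.snd (h (X, 0) (Y, 0))
    simp only [br, D, Prod.snd_add] at h2
    simp only [hL0] at h2
    rw [show (0:Fn) - 0 + ω X Y = ω X Y by ring, zero_add, zero_add] at h2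
    linear_combination h2
  · intro h a b
    obtain ⟨X, f⟩ := a
    obtain ⟨Y, g⟩ := b
    simp only [br, D]
    refine Prod.ext ?_ ?_
    · simp only [Prod.fst_add]
      exact leibniz_lie Z X Y
    · simp only [Prod.snd_add]
      have e1 := hL_br Z X f
      have e2 := hL_br Z Y g
      have e3 := h X Y
      have expand : L Z (L X g - L Y f + ω X Y) =
          L Z (L X g) - L Z (L Y f) + L Z (ω X Y) := by
        rw [hL_add, hL_sub]
      rw [expand]
      have eXg := hL_br Z X g  -- L [Z,X] g = L Z (L X g) - L X (L Z g)
      have eYf := hL_br Z Y f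
      have eXα : L X (L Z g + α Y) = L X (L Z g) + L X (α Y) := hL_add X _ _
      have eYα : L Y (L Z f + α X) = L Y (L Z f) + L Y (α X) := hL_add Y _ _
      rw [eXα, eYα, eXg, eYf]
      linear_combination e3
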